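/- arXiv:1411.1028 — 2 statements merged into one kernel-verified Lean document; each statement's English description precedes it below -/
import Mathlib

section
/- Fix n ≥ 2, indices 1 ≤ i < j ≤ n, a real number q, and points p₁, …, pₙ in a real inner product space E. Let B = {i, i+1, …, j−1} and define p̂_m = p_m + (q−1)·(p_i − p_j) for m ∈ B and p̂_m = p_m for m ∉ B. Writing a_{kl} = ‖p_k − p_l‖² (with the convention a_{mm} = 0 and a_{kl} = a_{lk}), the new edge norms are given by the following formulas, which depend only on the old edge norms: if k and l are both in B or both not in B then ‖p̂_k − p̂_l‖² = a_{kl}; and if k ∈ B and l ∉ B then ‖p̂_k − p̂_l‖² = a_{kl} + (q−1)²·a_{ij} + (q−1)·(a_{kj} + a_{il}) + (1−q)·(a_{ik} + a_{jl}). In particular ‖p̂_i − p̂_j‖² = q²·a_{ij}, so this q-rescaling multiplies the edge norm vector by an explicit matrix whose entries are integer polynomials in q of degree at most 2, independent of the points p. -/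
/-- The `q`-rescaling of the edge between vertices `i` and `j`: the vertices indexed by
`B = {i, i+1, …, j−1}` are translated by `(q−1)·(p_i − p_j)` and all others are fixed. -/
noncomputable def qRescale {E : Type*} [NormedAddCommGroup E] [InnerProductSpace ℝ E]
    {n : ℕ} (i j : Fin n) (q : ℝ) (p : Fin n → E) : Fin n → E :=
  fun m => if i ≤ m ∧ m < j then p m + (q - 1) • (p i - p j) else p m

/-!
Translating the block `B` by `(q-1)•(p_i - p_j)` is a rigid motion of each of the two
subconfigurations, so only the edges between `B` and its complement change.  For those,
expanding `‖(p_k - p_l) + t•(p_i - p_j)‖²` leaves the cross term `⟪p_k - p_l, p_i - p_j⟫`,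
which the four-point polarization identity expresses through squared distances.  The edge
`ij` itself is the case `k = i`, `l = j`.
-/

section EdgeNorms

variable {E : Type*} [NormedAddCommGroup E] [InnerProductSpace ℝ E]

theorem two_mul_real_inner_sub_sub (a b c d : E) :
    2 * inner ℝ (a - b) (c - d) = ‖a - d‖ ^ 2 + ‖c - b‖ ^ 2 - ‖c - a‖ ^ 2 - ‖d - b‖ ^ 2 := by
  simp only [norm_sub_sq_real, inner_sub_left, inner_sub_right]
  rw [real_inner_comm c a, real_inner_comm c b, real_inner_comm d b]
  ring

theorem norm_add_smul_sub_sub_sq (t : ℝ) (x y u v : E) :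
    ‖x + t • (u - v) - y‖ ^ 2 =
      ‖x - y‖ ^ 2 + t ^ 2 * ‖u - v‖ ^ 2
        + t * (‖x - v‖ ^ 2 + ‖u - y‖ ^ 2) - t * (‖u - x‖ ^ 2 + ‖v - y‖ ^ 2) := by
  have hcross := two_mul_real_inner_sub_sub x y u v
  rw [add_sub_right_comm, norm_add_sq_real, real_inner_smul_right, norm_smul,
    Real.norm_eq_abs, mul_pow, sq_abs]
  linear_combination t * hcross

end EdgeNorms

section QRescale

variable {E : Type*} [NormedAddCommGroup E] [InnerProductSpace ℝ E]
  {n : ℕ} {i j m : Fin n} {q : ℝ} {p : Fin n → E}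

theorem qRescale_of_mem (hm : i ≤ m ∧ m < j) :
    qRescale i j q p m = p m + (q - 1) • (p i - p j) :=
  if_pos hm

theorem qRescale_of_not_mem (hm : ¬(i ≤ m ∧ m < j)) : qRescale i j q p m = p m :=
  if_neg hm

theorem qRescale_sub_of_iff {k l : Fin n} (h : (i ≤ k ∧ k < j) ↔ (i ≤ l ∧ l < j)) :
    qRescale i j q p k - qRescale i j q p l = p k - p l := by
  by_cases hk : i ≤ k ∧ k < j
  · rw [qRescale_of_mem hk, qRescale_of_mem (h.mp hk), add_sub_add_right_eq_sub]
  · rw [qRescale_of_not_mem hk, qRescale_of_not_mem (mt h.mpr hk)]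

theorem norm_qRescale_sub_sq_of_mem_of_not_mem {k l : Fin n} (hk : i ≤ k ∧ k < j)
    (hl : ¬(i ≤ l ∧ l < j)) :
    ‖qRescale i j q p k - qRescale i j q p l‖ ^ 2 =
      ‖p k - p l‖ ^ 2 + (q - 1) ^ 2 * ‖p i - p j‖ ^ 2
        + (q - 1) * (‖p k - p j‖ ^ 2 + ‖p i - p l‖ ^ 2)
        + (1 - q) * (‖p i - p k‖ ^ 2 + ‖p j - p l‖ ^ 2) := by
  rw [qRescale_of_mem hk, qRescale_of_not_mem hl, norm_add_smul_sub_sub_sq]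
  ring

end QRescale

theorem qRescale_edge_norms_general {E : Type*} [NormedAddCommGroup E] [InnerProductSpace ℝ E]
    (n : ℕ) (i j : Fin n) (hij : i < j) (q : ℝ) (p : Fin n → E) :
    (∀ k l : Fin n, ((i ≤ k ∧ k < j) ↔ (i ≤ l ∧ l < j)) →
        ‖qRescale i j q p k - qRescale i j q p l‖ ^ 2 = ‖p k - p l‖ ^ 2) ∧
    (∀ k l : Fin n, (i ≤ k ∧ k < j) → ¬(i ≤ l ∧ l < j) →
        ‖qRescale i j q p k - qRescale i j q p l‖ ^ 2 =
          ‖p k - p l‖ ^ 2 + (q - 1) ^ 2 * ‖p i - p j‖ ^ 2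
            + (q - 1) * (‖p k - p j‖ ^ 2 + ‖p i - p l‖ ^ 2)
            + (1 - q) * (‖p i - p k‖ ^ 2 + ‖p j - p l‖ ^ 2)) ∧
    ‖qRescale i j q p i - qRescale i j q p j‖ ^ 2 = q ^ 2 * ‖p i - p j‖ ^ 2 := by
  refine ⟨fun k l h => by rw [qRescale_sub_of_iff h], fun k l hk hl =>
    norm_qRescale_sub_sq_of_mem_of_not_mem hk hl, ?_⟩
  have hi : i ≤ i ∧ i < j := ⟨le_rfl, hij⟩
  have hj : ¬(i ≤ j ∧ j < j) := fun h => lt_irrefl j h.2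
  rw [norm_qRescale_sub_sq_of_mem_of_not_mem hi hj, sub_self, sub_self, norm_zero]
  ring

/-- **Quadratic matrices / rescaling a general edge.**  For `i < j` and the `q`-rescaling
`p̂` of the points `p` along the edge between vertices `i` and `j` (fixing the
subconfigurations indexed by `B = {i,…,j−1}` and its complement rigidly), the new edge
norms are given by explicit formulas in the old edge norms: edges with both endpoints in
`B`, or both outside `B`, are unchanged, while for `k ∈ B` and `l ∉ B` the new norm is
`a_{kl} + (q−1)²·a_{ij} + (q−1)·(a_{kj}+a_{il}) + (1−q)·(a_{ik}+a_{jl})`.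
In particular, `‖p̂_i − p̂_j‖² = q²·a_{ij}`. -/
theorem qRescale_edge_norms {E : Type*} [NormedAddCommGroup E] [InnerProductSpace ℝ E]
    (n : ℕ) (hn : 2 ≤ n) (i j : Fin n) (hij : i < j) (q : ℝ) (p : Fin n → E) :
    (∀ k l : Fin n, ((i ≤ k ∧ k < j) ↔ (i ≤ l ∧ l < j)) →
        ‖qRescale i j q p k - qRescale i j q p l‖ ^ 2 = ‖p k - p l‖ ^ 2) ∧
    (∀ k l : Fin n, (i ≤ k ∧ k < j) → ¬(i ≤ l ∧ l < j) →
        ‖qRescale i j q p k - qRescale i j q p l‖ ^ 2 =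
          ‖p k - p l‖ ^ 2 + (q - 1) ^ 2 * ‖p i - p j‖ ^ 2
            + (q - 1) * (‖p k - p j‖ ^ 2 + ‖p i - p l‖ ^ 2)
            + (1 - q) * (‖p i - p k‖ ^ 2 + ‖p j - p l‖ ^ 2)) ∧
    ‖qRescale i j q p i - qRescale i j q p j‖ ^ 2 = q ^ 2 * ‖p i - p j‖ ^ 2 :=
  qRescale_edge_norms_general n i j hij q p
end

section
/- Fix n ≥ 2, an index 1 ≤ i < n with j = i+1, and a real number q. Let 𝓔ₙ be the set of pairs (k,l) with 1 ≤ k < l ≤ n, and define three real matrices with rows and columns indexed by 𝓔ₙ, specifying each row as a linear combination of the standard basis vectors e_{k'l'}: (i) S_i: row (i,j) is q²·e_{ij}; row (k,l) is e_{kl} if {k,l} ∩ {i,j} = ∅; row (i,l) is e_{jl} if l > j; row (k,i) is e_{kj} if k < i; row (k,j) is (q²−q)·e_{ij} + q·e_{ki} + (1−q)·e_{kj} if k < i; row (j,l) is (q²−q)·e_{ij} + q·e_{il} + (1−q)·e_{jl} if l > j. (ii) P_i: row (k,l) is e_{τ(k)τ(l)}, where τ is the transposition swapping i and j and the indices τ(k),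 τ(l) are reordered increasingly. (iii) R_i: row (i,j) is q²·e_{ij}; row (k,l) is e_{kl} whenever {k,l} ∩ {i,j} = ∅ or {k,l} contains j but not i; row (k,l) is (q²−q)·e_{ij} + q·e_{im} + (1−q)·e_{jm} whenever {k,l} = {i,m} with m ∉ {i,j}. Then S_i = P_i · R_i, where the product is matrix multiplication with the convention that row (k,l) of a product M·N is the result of applying N to row (k,l) of M. -/
/-- The index set `𝓔ₙ` of edges: pairs `(k,l)` with `k < l` in `Fin n`. -/
abbrev EdgeIdx (n : ℕ) : Type := {p : Fin n × Fin n // p.1 < p.2}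

/-- The standard basis vector `e_{ab}` of `ℝ^{𝓔ₙ}`, viewed symmetrically in `a, b`
(with the convention `e_{mm} = 0`). -/
def eVec {n : ℕ} (a b : Fin n) : EdgeIdx n → ℝ :=
  fun c => if (c.1.1 = a ∧ c.1.2 = b) ∨ (c.1.1 = b ∧ c.1.2 = a) then 1 else 0

/-- The matrix `S_i` of the standard braid generator `s_{i,i+1}` (here `j = i+1`) in the
simplicial representation (the LKB representation at `t = 1`), given row-wise. -/
def simpGenMatrix (n : ℕ) (i j : Fin n) (q : ℝ) : Matrix (EdgeIdx n) (EdgeIdx n) ℝ :=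
  fun r c =>
    if r.1.1 = i ∧ r.1.2 = j then q ^ 2 * eVec i j c
    else if r.1.1 = i then eVec j r.1.2 c
    else if r.1.2 = i then eVec r.1.1 j c
    else if r.1.2 = j then
      (q ^ 2 - q) * eVec i j c + q * eVec r.1.1 i c + (1 - q) * eVec r.1.1 j c
    else if r.1.1 = j then
      (q ^ 2 - q) * eVec i j c + q * eVec i r.1.2 c + (1 - q) * eVec j r.1.2 c
    else eVec r.1.1 r.1.2 c

/-- The permutation matrix `P_i` describing the relabeling of edges induced by the
transposition swapping `i` and `j`. -/
def permMatrix (n : ℕ) (i j : Fin n) : Matrix (EdgeIdx n) (EdgeIdx n) ℝ :=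
  fun r c => eVec (Equiv.swap i j r.1.1) (Equiv.swap i j r.1.2) c

/-- The edge rescaling matrix `R_i = R^{i,j}_{rc(i,j)}` (with `j = i+1`), rescaling the
edge `e_{ij}` by `q` while fixing the edges of the right complement. -/
def rcRescaleMatrix (n : ℕ) (i j : Fin n) (q : ℝ) : Matrix (EdgeIdx n) (EdgeIdx n) ℝ :=
  fun r c =>
    if r.1.1 = i ∧ r.1.2 = j then q ^ 2 * eVec i j c
    else if r.1.1 = i then
      (q ^ 2 - q) * eVec i j c + q * eVec i r.1.2 c + (1 - q) * eVec j r.1.2 c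
    else if r.1.2 = i then
      (q ^ 2 - q) * eVec i j c + q * eVec i r.1.1 c + (1 - q) * eVec j r.1.1 c
    else eVec r.1.1 r.1.2 c

/-- The edge rescaling matrix `R′_i = R^{i,j}_{lc(i,j)}` (with `j = i+1`), rescaling the
edge `e_{ij}` by `q` while fixing the edges of the left complement. -/
def lcRescaleMatrix (n : ℕ) (i j : Fin n) (q : ℝ) : Matrix (EdgeIdx n) (EdgeIdx n) ℝ :=
  fun r c =>
    if r.1.1 = i ∧ r.1.2 = j then q ^ 2 * eVec i j c
    else if r.1.1 = j then
      (q ^ 2 - q) * eVec i j c + q * eVec j r.1.2 c + (1 - q) * eVec i r.1.2 c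
    else if r.1.2 = j then
      (q ^ 2 - q) * eVec i j c + q * eVec j r.1.1 c + (1 - q) * eVec i r.1.1 c
    else eVec r.1.1 r.1.2 c

/-!
Left multiplication by `P_i` permutes rows: row `(k,l)` of `P_i R_i` is row `τ(k,l)` of `R_i`.
So `τ` carries the rows `(i,l)` and `(k,i)` of `S_i` to rows of `R_i` avoiding `i`, which are
plain basis vectors, the rows `(k,j)` and `(j,l)` to the rescaled rows `{i,m}` of `R_i`, and fixes
`(i,j)` and the rows disjoint from `{i,j}`; each pair of rows then agrees by inspection.
-/

namespace EdgeIdx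

variable {n : ℕ}

def ofNe (a b : Fin n) (h : a ≠ b) : EdgeIdx n :=
  if hab : a < b then ⟨(a, b), hab⟩ else ⟨(b, a), h.lt_or_gt.resolve_left hab⟩

theorem ofNe_of_lt {a b : Fin n} (hab : a < b) : ofNe a b hab.ne = ⟨(a, b), hab⟩ :=
  dif_pos hab

theorem ofNe_comm (a b : Fin n) (h : a ≠ b) : ofNe a b h = ofNe b a h.symm := by
  rcases h.lt_or_gt with hab | hba
  · rw [ofNe_of_lt hab, ofNe, dif_neg (not_lt.2 hab.le)]
  · rw [ofNe_of_lt hba, ofNe, dif_neg (not_lt.2 hba.le)]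

def map (σ : Equiv.Perm (Fin n)) (r : EdgeIdx n) : EdgeIdx n :=
  ofNe (σ r.1.1) (σ r.1.2) (σ.injective.ne r.2.ne)

end EdgeIdx

open EdgeIdx

theorem eVec_comm {n : ℕ} (a b : Fin n) : eVec a b = eVec b a := by
  funext c
  simp only [eVec, or_comm]

theorem eVec_apply_eq_ite {n : ℕ} {a b : Fin n} (h : a ≠ b) (c : EdgeIdx n) :
    eVec a b c = if c = ofNe a b h then 1 else 0 := by
  obtain ⟨⟨c₁, c₂⟩, hc⟩ := c
  rcases h.lt_or_gt with hab | hba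
  · have : ¬(c₁ = b ∧ c₂ = a) := fun ⟨h₁, h₂⟩ => (hab.trans (h₂ ▸ h₁ ▸ hc)).false
    simp only [eVec, ofNe_of_lt hab, Subtype.ext_iff, Prod.ext_iff, or_iff_left this]
  · have : ¬(c₁ = a ∧ c₂ = b) := fun ⟨h₁, h₂⟩ => (hba.trans (h₂ ▸ h₁ ▸ hc)).false
    simp only [eVec, ofNe_comm a b, ofNe_of_lt hba, Subtype.ext_iff, Prod.ext_iff,
      or_iff_right this]

theorem permMatrix_mul_apply {n : ℕ} (i j : Fin n) (M : Matrix (EdgeIdx n) (EdgeIdx n) ℝ)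
    (r c : EdgeIdx n) : (permMatrix n i j * M) r c = M (r.map (Equiv.swap i j)) c := by
  simp only [Matrix.mul_apply, permMatrix,
    eVec_apply_eq_ite ((Equiv.swap i j).injective.ne r.2.ne), ite_mul, one_mul, zero_mul,
    Finset.sum_ite_eq', Finset.mem_univ, if_true]
  rfl

section Rows

variable {n : ℕ} {i j : Fin n} (q : ℝ)

theorem rcRescaleMatrix_ofNe_of_ne {a b : Fin n} (h : a ≠ b) (ha : a ≠ i) (hb : b ≠ i) :
    rcRescaleMatrix n i j q (ofNe a b h) = eVec a b := by
  funext c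
  unfold ofNe
  split_ifs <;> simp [rcRescaleMatrix, ha, hb, eVec_comm b a]

theorem rcRescaleMatrix_ofNe_left {m : Fin n} (h : i ≠ m) (hm : m ≠ j) :
    rcRescaleMatrix n i j q (ofNe i m h) =
      fun c => (q ^ 2 - q) * eVec i j c + q * eVec i m c + (1 - q) * eVec j m c := by
  funext c
  unfold ofNe
  split_ifs <;> simp [rcRescaleMatrix, h.symm, hm]

theorem simpGenMatrix_row_eq (hij : i < j) (r : EdgeIdx n) :
    simpGenMatrix n i j q r = rcRescaleMatrix n i j q (r.map (Equiv.swap i j)) := by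
  obtain ⟨⟨k, l⟩, hkl⟩ := r
  have hkl' : k < l := hkl
  simp only [map]
  by_cases hki : k = i
  · subst hki
    by_cases hlj : l = j
    · subst hlj
      simp only [Equiv.swap_apply_left, Equiv.swap_apply_right, ofNe_comm l k, ofNe_of_lt hij]
      funext c
      simp [simpGenMatrix, rcRescaleMatrix]
    · simp only [Equiv.swap_apply_left, Equiv.swap_apply_of_ne_of_ne hkl'.ne' hlj,
        rcRescaleMatrix_ofNe_of_ne q _ hij.ne' hkl'.ne']
      funext c
      simp [simpGenMatrix, hlj]
  by_cases hli : l = i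
  · subst hli
    have hkj : k ≠ j := (hkl'.trans hij).ne
    simp only [Equiv.swap_apply_left, Equiv.swap_apply_of_ne_of_ne hki hkj,
      rcRescaleMatrix_ofNe_of_ne q _ hki hij.ne']
    funext c
    simp [simpGenMatrix, hki]
  by_cases hlj : l = j
  · subst hlj
    have hkj : k ≠ l := hkl'.ne
    simp only [Equiv.swap_apply_right, Equiv.swap_apply_of_ne_of_ne hki hkj, ofNe_comm k i,
      rcRescaleMatrix_ofNe_left q (Ne.symm hki) hkj]
    funext c
    simp [simpGenMatrix, hki, hli, eVec_comm k]
  by_cases hkj : k = j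
  · subst hkj
    simp only [Equiv.swap_apply_right, Equiv.swap_apply_of_ne_of_ne hli hlj,
      rcRescaleMatrix_ofNe_left q (Ne.symm hli) hlj]
    funext c
    simp [simpGenMatrix, hki, hli, hlj]
  simp only [Equiv.swap_apply_of_ne_of_ne hki hkj, Equiv.swap_apply_of_ne_of_ne hli hlj,
    rcRescaleMatrix_ofNe_of_ne q _ hki hli]
  funext c
  simp [simpGenMatrix, hki, hli, hlj, hkj]

end Rows

theorem simpGen_eq_perm_mul_rcRescale_general (n : ℕ) (i j : Fin n)
    (hij : (i : ℕ) + 1 = (j : ℕ)) (q : ℝ) :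
    simpGenMatrix n i j q = permMatrix n i j * rcRescaleMatrix n i j q := by
  ext r c
  rw [permMatrix_mul_apply, simpGenMatrix_row_eq q (Fin.lt_def.2 (by omega)) r]

/-- **`S_i = P_i · R_i`.** For `j = i+1`, the matrix of the standard braid generator
`s_{i,i+1}` in the simplicial representation factors as the edge-relabeling permutation
matrix `P_i` times the edge rescaling matrix `R_i = R^{i,i+1}_{rc(i,i+1)}`. -/
theorem simpGen_eq_perm_mul_rcRescale (n : ℕ) (hn : 2 ≤ n) (i j : Fin n)
    (hij : (i : ℕ) + 1 = (j : ℕ)) (q : ℝ) :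
    simpGenMatrix n i j q = permMatrix n i j * rcRescaleMatrix n i j q :=
  simpGen_eq_perm_mul_rcRescale_general n i j hij q
end
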